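/- Let B be a skew-symmetric n×n integer matrix, and let S, T partition {1,...,n} with k | b_{ij} for all i ∈ S, j ∈ T, where k > 1. Then for ANY finite sequence of mutations μ_{m_1}, ..., μ_{m_r} applied to B, the resulting matrix B^{(r)} satisfies k | b^{(r)}_{ij} for all i ∈ S, j ∈ T. -/

import Mathlib

/-!
A mutation at `m` negates or keeps an entry `b i j`, or adds `b i m * |b m j|` to it.
For `i ∈ S`, `j ∈ T` that summand is divisible by `k` whichever side of the partition `m` lies on:
`k ∣ b i m` if `m ∈ T` and `k ∣ b m j` if `m ∈ S`. So one mutation, and hence any sequence of them,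
keeps `k ∣ b i j` for all `i ∈ S`, `j ∈ T`.
-/

/-- Matrix mutation of an integer matrix `B` at index `m`. -/
def matrixMutation {n : ℕ} (m : Fin n) (B : Matrix (Fin n) (Fin n) ℤ) :
    Matrix (Fin n) (Fin n) ℤ :=
  fun i j =>
    if i = m ∨ j = m then -B i j
    else if B i m * B m j > 0 then B i j + B i m * |B m j|
    else B i j

section

variable {n : ℕ} {k : ℤ} {S T : Set (Fin n)}

theorem dvd_matrixMutation_apply {m i j : Fin n} {B : Matrix (Fin n) (Fin n) ℤ}
    (hij : k ∣ B i j) (hm : k ∣ B i m ∨ k ∣ B m j) : k ∣ matrixMutation m B i j := by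
  have hcorr : k ∣ B i m * |B m j| := by
    rcases hm with him | hmj
    · exact him.mul_right _
    · exact ((dvd_abs k _).mpr hmj).mul_left _
  unfold matrixMutation
  split_ifs
  · exact hij.neg_right
  · exact hij.add hcorr
  · exact hij

theorem dvd_matrixMutation_of_mem_union {m : Fin n} (hm : m ∈ S ∪ T)
    {B : Matrix (Fin n) (Fin n) ℤ} (hdiv : ∀ i ∈ S, ∀ j ∈ T, k ∣ B i j) :
    ∀ i ∈ S, ∀ j ∈ T, k ∣ matrixMutation m B i j := fun i hi j hj =>
  dvd_matrixMutation_apply (hdiv i hi j hj) <| hm.elim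
    (fun hmS => Or.inr (hdiv m hmS j hj)) (fun hmT => Or.inl (hdiv i hi m hmT))

theorem dvd_foldl_matrixMutation {ms : List (Fin n)} (hms : ∀ m ∈ ms, m ∈ S ∪ T)
    {B : Matrix (Fin n) (Fin n) ℤ} (hdiv : ∀ i ∈ S, ∀ j ∈ T, k ∣ B i j) :
    ∀ i ∈ S, ∀ j ∈ T, k ∣ (ms.foldl (fun M m => matrixMutation m M) B) i j := by
  induction ms generalizing B with
  | nil => exact hdiv
  | cons m ms ih =>
    exact ih (fun m' hm' => hms m' (List.mem_cons_of_mem m hm'))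
      (dvd_matrixMutation_of_mem_union (hms m List.mem_cons_self) hdiv)

end

theorem kPartition_preserved_by_mutation_sequences_general {n : ℕ}
    (B : Matrix (Fin n) (Fin n) ℤ)
    (S T : Set (Fin n)) (hunion : S ∪ T = Set.univ)
    (k : ℤ)
    (hdiv : ∀ i ∈ S, ∀ j ∈ T, k ∣ B i j)
    (ms : List (Fin n)) :
    ∀ i ∈ S, ∀ j ∈ T,
      k ∣ (ms.foldl (fun M m => matrixMutation m M) B) i j :=
  dvd_foldl_matrixMutation (fun m _ => hunion ▸ Set.mem_univ m) hdiv

theorem kPartition_preserved_by_mutation_sequences {n : ℕ}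
    (B : Matrix (Fin n) (Fin n) ℤ) (hB : ∀ i j, B j i = -B i j)
    (S T : Set (Fin n)) (hdisj : Disjoint S T) (hunion : S ∪ T = Set.univ)
    (k : ℤ) (hk : 1 < k)
    (hdiv : ∀ i ∈ S, ∀ j ∈ T, k ∣ B i j)
    (ms : List (Fin n)) :
    ∀ i ∈ S, ∀ j ∈ T,
      k ∣ (ms.foldl (fun M m => matrixMutation m M) B) i j :=
  kPartition_preserved_by_mutation_sequences_general B S T hunion k hdiv ms
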